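/- Let X be a finite multiset of d' items, each of value 1, with subsets ordered by total value (equivalently, cardinality). Let d' = q·d − r with q ≥ 1 and 0 ≤ r ≤ d−1. Then the value of the l-out-of-d maximin share of X equals q·l − min(l,r), and the value of the l'-out-of-d' maximin share of X equals l'. -/

import Mathlib

open Finset

/-- A partition of the finite type `α` into `d` (possibly empty) pairwise-disjoint parts. -/
def IsPartition {α : Type} [Fintype α] [DecidableEq α] (d : ℕ) (Y : Fin d → Finset α) : Prop :=
  (∀ i j : Fin d, i ≠ j → Disjoint (Y i) (Y j)) ∧
    Finset.univ.biUnion Y = (Finset.univ : Finset α)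

/-- `MMSLe pref l d l' d'` says that the `l`-out-of-`d` maximin share of `α` is at least as good
(w.r.t. `pref`, where `pref A B` means `A ⪰ B`) as the `l'`-out-of-`d'` maximin share:
for every `d'`-partition `Y'` there is a `d`-partition `Y` whose minimal `l`-part union is
`⪰` some `l'`-part union of `Y'` (hence `⪰` the minimal one). -/
def MMSLe {α : Type} [Fintype α] [DecidableEq α]
    (pref : Finset α → Finset α → Prop) (l d l' d' : ℕ) : Prop :=
  ∀ Y' : Fin d' → Finset α, IsPartition d' Y' →
    ∃ Y : Fin d → Finset α, IsPartition d Y ∧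
      ∀ S : Finset (Fin d), S.card = l →
        ∃ S' : Finset (Fin d'), S'.card = l' ∧ pref (S.biUnion Y) (S'.biUnion Y')

/-- The value of the `l`-out-of-`d` maximin share w.r.t. a ℕ-valued valuation `v`:
the maximum over `d`-partitions of the minimum value of a union of exactly `l` parts. -/
noncomputable def mmsValN {α : Type} [Fintype α] [DecidableEq α]
    (v : Finset α → ℕ) (l d : ℕ) : ℕ :=
  sSup {x | ∃ Y : Fin d → Finset α, IsPartition d Y ∧
    x = sInf {y | ∃ S : Finset (Fin d), S.card = l ∧ y = v (S.biUnion Y)}}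

/-!
The value of a union of parts depends only on the part sizes, `d` naturals summing to `q d - r`.
For any such sizes, the `l` smallest sum to at most `q l - min l r`: if a size outside them is
`< q`, each of the `l` is `≤ q - 1`; otherwise the other `d - l` sizes sum to at least
`q (d - l)`. Conversely, the most balanced sizes (`r` parts of size `q - 1`, the others of size
`q`) are realised by a partition, and any `l` of its parts have at most `min l r` of size `q - 1`.
The `l'`-out-of-`d'` claim is the case `q = 1`, `r = 0`.
-/

section Partition

variable {α : Type} [Fintype α] [DecidableEq α] {d : ℕ} {Y : Fin d → Finset α}

theorem IsPartition.card_biUnion (hY : IsPartition d Y) (S : Finset (Fin d)) :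
    (S.biUnion Y).card = ∑ i ∈ S, (Y i).card :=
  Finset.card_biUnion fun i _ j _ hij => hY.1 i j hij

theorem IsPartition.sum_card (hY : IsPartition d Y) : ∑ i, (Y i).card = Fintype.card α := by
  rw [← hY.card_biUnion, hY.2, Finset.card_univ]

/-- Parts of prescribed sizes are the fibres of an equivalence `α ≃ Σ i, Fin (c i)`. -/
theorem exists_isPartition_card_eq (c : Fin d → ℕ) (hc : ∑ i, c i = Fintype.card α) :
    ∃ Y : Fin d → Finset α, IsPartition d Y ∧ ∀ i, (Y i).card = c i := by
  obtain ⟨e⟩ : Nonempty ((Σ i, Fin (c i)) ≃ α) :=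
    Fintype.card_eq.mp (by rw [Fintype.card_sigma, ← hc]; simp)
  let part (i : Fin d) : Fin (c i) ↪ α :=
    ⟨fun t => e ⟨i, t⟩, fun _ _ h => eq_of_heq (Sigma.mk.inj (e.injective h)).2⟩
  refine ⟨fun i => univ.map (part i), ⟨fun i j hij => ?_, ?_⟩, fun i => by simp⟩
  · simp only [Finset.disjoint_left, Finset.mem_map, Finset.mem_univ, true_and,
      forall_exists_index]
    rintro _ s rfl ⟨t, hst⟩
    exact hij (congrArg Sigma.fst (e.injective hst)).symm
  · refine eq_univ_of_forall fun x => mem_biUnion.mpr ⟨(e.symm x).1, mem_univ _, ?_⟩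
    exact mem_map.mpr ⟨(e.symm x).2, mem_univ _, e.apply_symm_apply x⟩

end Partition

theorem mmsValN_eq_of_forall_exists_le {α : Type} [Fintype α] [DecidableEq α]
    {v : Finset α → ℕ} {l d m : ℕ}
    (hle : ∀ Y : Fin d → Finset α, IsPartition d Y →
      ∃ S : Finset (Fin d), S.card = l ∧ v (S.biUnion Y) ≤ m)
    (hge : ∃ Y : Fin d → Finset α, IsPartition d Y ∧
      ∀ S : Finset (Fin d), S.card = l → m ≤ v (S.biUnion Y)) :
    mmsValN v l d = m := by
  have hinf_le : ∀ Y, IsPartition d Y →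
      sInf {y | ∃ S : Finset (Fin d), S.card = l ∧ y = v (S.biUnion Y)} ≤ m := fun Y hY => by
    obtain ⟨S, hS, hSm⟩ := hle Y hY
    refine (Nat.sInf_le ?_).trans hSm
    exact ⟨S, hS, rfl⟩
  obtain ⟨Y₀, hY₀, hY₀m⟩ := hge
  refine IsGreatest.csSup_eq ⟨⟨Y₀, hY₀, (le_antisymm (hinf_le Y₀ hY₀) ?_).symm⟩, ?_⟩
  · obtain ⟨S, hS, -⟩ := hle Y₀ hY₀
    refine le_csInf ⟨_, S, hS, rfl⟩ ?_
    rintro _ ⟨S, hS, rfl⟩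
    exact hY₀m S hS
  · rintro _ ⟨Y, hY, rfl⟩
    exact hinf_le Y hY

theorem exists_card_eq_sum_le {ι : Type*} [Fintype ι] [DecidableEq ι] (f : ι → ℕ) {l q r : ℕ} (hl : l ≤ Fintype.card ι)
    (hf : ∑ i, f i + r = q * Fintype.card ι) :
    ∃ S : Finset ι, S.card = l ∧ ∑ i ∈ S, f i ≤ q * l - min l r := by
  obtain ⟨S, hSmem, hSmin⟩ := exists_min_image (powersetCard l univ) (fun T => ∑ i ∈ T, f i)
    (powersetCard_nonempty.mpr (by simpa using hl))
  have hSl : S.card = l := (mem_powersetCard.mp hSmem).2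
  refine ⟨S, hSl, ?_⟩
  have hexchange : ∀ i ∈ S, ∀ j ∉ S, f i ≤ f j := by
    intro i hi j hj
    have hj' : j ∉ S.erase i := fun h => hj (mem_of_mem_erase h)
    have hmem : insert j (S.erase i) ∈ powersetCard l univ := by
      rw [mem_powersetCard, card_insert_of_notMem hj', card_erase_of_mem hi, ← hSl,
        Nat.sub_add_cancel (card_pos.mpr ⟨i, hi⟩)]
      exact ⟨subset_univ _, rfl⟩
    have := hSmin _ hmem
    rw [sum_insert hj', ← add_sum_erase S f hi] at this
    omega
  by_cases hsmall : ∃ j ∉ S, f j < q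
  · obtain ⟨j, hj, hjq⟩ := hsmall
    have : ∑ i ∈ S, f i ≤ q * l - l := by
      calc ∑ i ∈ S, f i ≤ ∑ _i ∈ S, (q - 1) :=
            sum_le_sum fun i hi => (hexchange i hi j hj).trans (by omega)
        _ = q * l - l := by rw [sum_const, hSl, smul_eq_mul, mul_comm, Nat.sub_one_mul]
    omega
  · push Not at hsmall
    have hcompl : q * (Fintype.card ι - l) ≤ ∑ i ∈ Sᶜ, f i := by
      calc q * (Fintype.card ι - l) = ∑ _i ∈ Sᶜ, q := by
            rw [sum_const, card_compl, hSl, smul_eq_mul, mul_comm]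
        _ ≤ ∑ i ∈ Sᶜ, f i := sum_le_sum fun j hj => hsmall j (mem_compl.mp hj)
    rw [← sum_add_sum_compl S] at hf
    have : q * l + q * (Fintype.card ι - l) = q * Fintype.card ι := by
      rw [← mul_add, Nat.add_sub_cancel' hl]
    omega

section Balanced

variable {q r d : ℕ}

def balancedSizes (q r d : ℕ) (i : Fin d) : ℕ := q - if i.val < r then 1 else 0

theorem sum_balancedSizes_add_card_filter (hq : 1 ≤ q) (S : Finset (Fin d)) :
    ∑ i ∈ S, balancedSizes q r d i + #{i ∈ S | i.val < r} = q * #S := by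
  rw [card_filter, ← sum_add_distrib, sum_congr rfl fun i _ => ?_, sum_const, smul_eq_mul,
    mul_comm]
  unfold balancedSizes
  split_ifs <;> omega

theorem sum_balancedSizes (hq : 1 ≤ q) (hr : r ≤ d) :
    ∑ i, balancedSizes q r d i + r = q * d := by
  have := sum_balancedSizes_add_card_filter (r := r) hq (univ : Finset (Fin d))
  rwa [Fin.card_filter_val_lt, min_eq_right hr, card_univ, Fintype.card_fin] at this

theorem le_sum_balancedSizes (hq : 1 ≤ q) (S : Finset (Fin d)) :
    q * #S - min #S r ≤ ∑ i ∈ S, balancedSizes q r d i := by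
  have hsum := sum_balancedSizes_add_card_filter (r := r) hq S
  have hS : #{i ∈ S | i.val < r} ≤ #S := card_filter_le _ _
  have hr : #{i ∈ S | i.val < r} ≤ r :=
    calc #{i ∈ S | i.val < r} ≤ #{i : Fin d | i < r} :=
          card_le_card (filter_subset_filter _ (subset_univ S))
      _ = min d r := Fin.card_filter_val_lt
      _ ≤ r := min_le_right _ _
  omega

end Balanced

theorem mmsValN_card_eq {α : Type} [Fintype α] [DecidableEq α] {l d q r : ℕ}
    (hld : l ≤ d) (hq : 1 ≤ q) (hr : r ≤ d) (hα : Fintype.card α + r = q * d) :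
    mmsValN (fun S : Finset α => S.card) l d = q * l - min l r := by
  refine mmsValN_eq_of_forall_exists_le (fun Y hY => ?_) ?_
  · obtain ⟨S, hS, hsum⟩ := exists_card_eq_sum_le (fun i => (Y i).card) (r := r)
      (by simpa using hld) (by rw [hY.sum_card, Fintype.card_fin, hα])
    exact ⟨S, hS, by rwa [hY.card_biUnion]⟩
  · obtain ⟨Y, hY, hcard⟩ := exists_isPartition_card_eq (α := α) (balancedSizes q r d)
      (by have := sum_balancedSizes hq hr; omega)
    refine ⟨Y, hY, fun S hS => ?_⟩
    simpa only [hY.card_biUnion, hcard, hS] using le_sum_balancedSizes hq S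

theorem stmt4_general {α : Type} [Fintype α] [DecidableEq α]
    (l d l' d' q r : ℕ) (hld : l ≤ d) (hld' : l' ≤ d')
    (hq : 1 ≤ q) (hr : r < d) (hqd : d' + r = q * d)
    (hcard : Fintype.card α = d') :
    mmsValN (fun S : Finset α => S.card) l d = q * l - min l r ∧
    mmsValN (fun S : Finset α => S.card) l' d' = l' := by
  refine ⟨mmsValN_card_eq hld hq hr.le (by rw [hcard, hqd]), ?_⟩
  simpa using
    mmsValN_card_eq (α := α) (q := 1) (r := 0) hld' le_rfl (Nat.zero_le _) (by simp [hcard])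

theorem stmt4 {α : Type} [Fintype α] [DecidableEq α]
    (l d l' d' q r : ℕ) (hl : 1 ≤ l) (hld : l ≤ d) (hl' : 1 ≤ l') (hld' : l' ≤ d')
    (hq : 1 ≤ q) (hr : r < d) (hqd : d' + r = q * d)
    (hcard : Fintype.card α = d') :
    mmsValN (fun S : Finset α => S.card) l d = q * l - min l r ∧
    mmsValN (fun S : Finset α => S.card) l' d' = l' :=
  stmt4_general l d l' d' q r hld hld' hq hr hqd hcard
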